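/- Let E be a finite effect algebra with (pairwise distinct) atoms a_1,…,a_m, let A ∈ M(E) be an n×m matrix whose rows enumerate Seq(E), and let B = (A|1) be A augmented by a column of ones. Then E has a state if and only if rank A = rank B and there exist nonnegative real numbers s_1,…,s_m such that A·(s_1,…,s_m)ᵀ = (1,…,1)ᵀ, i.e. Σ_{t=1}^m y_{it} s_t = 1 for every row i of A. -/

import Mathlib

/-- An effect algebra: a set with 0, 1 and a partially defined binary
operation `⊕`, modeled as an `Option`-valued operation. -/
structure EffectAlgebra (E : Type*) where
  oplus : E → E → Option E
  zero : E
  one : E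
  comm : ∀ p q, oplus p q = oplus q p
  assoc : ∀ p q r s qr, oplus q r = some qr → oplus p qr = some s →
    ∃ pq, oplus p q = some pq ∧ oplus pq r = some s
  orthosupp : ∀ p, ∃! q, oplus p q = some one
  zero_unit : ∀ p q, oplus one p = some q → p = zero

namespace EffectAlgebra

variable {E : Type*}

/-- `p ≤ q` iff there is `r` with `p ⊕ r` defined and equal to `q`. -/
def le (W : EffectAlgebra E) (p q : E) : Prop := ∃ r, W.oplus p r = some q

/-- An atom is a minimal element of `E \ {0}`. -/
def IsAtomElem (W : EffectAlgebra E) (x : E) : Prop :=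
  x ≠ W.zero ∧ ∀ y : E, W.le y x → y ≠ W.zero → y = x

/-- Partial orthosum of a list of elements. -/
def listSum (W : EffectAlgebra E) : List E → Option E
  | [] => some W.zero
  | x :: xs => (listSum W xs).bind (fun y => W.oplus x y)

/-- The orthosum `k 0 • a 0 ⊕ ⋯ ⊕ k (m-1) • a (m-1)`, when defined. -/
def mulSum (W : EffectAlgebra E) {m : ℕ} (a : Fin m → E) (k : Fin m → ℕ) : Option E :=
  W.listSum ((List.ofFn (fun t => List.replicate (k t) (a t))).flatten)

/-- `Seq(E)`: tuples `k` with `⨁ k t • a t` defined and equal to `1`. -/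
def SeqSet (W : EffectAlgebra E) {m : ℕ} (a : Fin m → E) : Set (Fin m → ℕ) :=
  {k | W.mulSum a k = some W.one}

/-- `a : Fin m → E` enumerates the atoms of `E` without repetition. -/
def AtomFamily (W : EffectAlgebra E) {m : ℕ} (a : Fin m → E) : Prop :=
  Function.Injective a ∧ (∀ t, W.IsAtomElem (a t)) ∧
    ∀ x : E, W.IsAtomElem x → ∃ t, x = a t

/-- `A ∈ M(E)`: the rows of `A` are pairwise distinct and enumerate `Seq(E)`. -/
def MemM (W : EffectAlgebra E) {m n : ℕ} (a : Fin m → E) (A : Matrix (Fin n) (Fin m) ℕ) : Prop :=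
  (∀ i j : Fin n, i ≠ j → ∃ t, A i t ≠ A j t) ∧
    {k : Fin m → ℕ | ∃ i, A i = k} = W.SeqSet a

/-- A state on an effect algebra. -/
def IsState (W : EffectAlgebra E) (s : E → ℝ) : Prop :=
  (∀ x, 0 ≤ s x ∧ s x ≤ 1) ∧ s W.one = 1 ∧
    ∀ p q r, W.oplus p q = some r → s p + s q ≤ 1 ∧ s r = s p + s q

end EffectAlgebra

/-- `(A|1)`: the matrix `A` augmented by a column of ones. -/
def augmentOnes {n m : ℕ} {R : Type*} [One R] (A : Matrix (Fin n) (Fin m) R) :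
    Matrix (Fin n) (Fin (m + 1)) R :=
  Matrix.of fun i j => if h : (j : ℕ) < m then A i ⟨j, h⟩ else 1


/-! Every element of a finite effect algebra is an orthosum of atoms, and the rows of `A` are
exactly the ways of writing `1` so; hence a state `s` yields the nonnegative solution
`t ↦ s (a t)` of `A s = 1`. Conversely, a nonnegative solution `w` defines
`s x = ∑ k t * w t` for any decomposition `x = ⨁ k t • a t`. This does not depend on the
decomposition: adding a decomposition of the orthosupplement of `x` gives a row of `A`.
The rank condition is implied by the solvability of `A s = 1` over `ℝ`: if `1` were not in the
rational column space of `A`, a rational functional `c` vanishing on the columns with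
`c ⬝ᵥ 1 ≠ 0` would give `0 = (c ᵥ* A) ⬝ᵥ s = c ⬝ᵥ 1`. -/

section Rank

open Matrix

lemma mem_range_mulVecLin_of_map_mulVec_eq {K L ι κ : Type*} [Field K] [Field L] [Algebra K L]
    [Fintype ι] [Fintype κ] (Q : Matrix ι κ K) (v : ι → K) (s : κ → L)
    (hs : Q.map (algebraMap K L) *ᵥ s = algebraMap K L ∘ v) :
    v ∈ LinearMap.range Q.mulVecLin := by
  classical
  by_contra hv
  obtain ⟨f, hfv, hf⟩ := Submodule.exists_dual_map_eq_bot_of_notMem hv inferInstance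
  set c : ι → K := fun i => f fun j => if i = j then 1 else 0
  have hfc : ∀ w, f w = c ⬝ᵥ w := fun w => by
    rw [f.pi_apply_eq_sum_univ w, dotProduct]
    exact Finset.sum_congr rfl fun i _ => by rw [smul_eq_mul, mul_comm]
  have hcQ : (algebraMap K L ∘ c) ᵥ* Q.map (algebraMap K L) = 0 := by
    ext j
    have : f (Q *ᵥ Pi.single j 1) = 0 := by
      rw [← Submodule.mem_bot K, ← hf]
      exact Submodule.mem_map_of_mem (LinearMap.mem_range_self _ _)
    rw [hfc, dotProduct_mulVec, dotProduct_single_one] at this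
    rw [← RingHom.map_vecMul, this, map_zero, Pi.zero_apply]
  apply hfv
  rw [hfc]
  apply (algebraMap K L).injective
  calc algebraMap K L (c ⬝ᵥ v)
        = (algebraMap K L ∘ c) ⬝ᵥ (Q.map (algebraMap K L) *ᵥ s) := by
          rw [hs, RingHom.map_dotProduct]
    _ = 0 := by rw [dotProduct_mulVec, hcQ, zero_dotProduct]
    _ = algebraMap K L 0 := (map_zero _).symm

variable {K : Type*} [Field K] {n m : ℕ}

lemma col_augmentOnes (Q : Matrix (Fin n) (Fin m) K) :
    (augmentOnes Q).col = Fin.snoc Q.col (fun _ => 1) := by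
  ext j i
  simp only [augmentOnes, Fin.snoc, col_apply, of_apply]
  split_ifs <;> rfl

lemma rank_augmentOnes_of_mem_range (Q : Matrix (Fin n) (Fin m) K)
    (h : (fun _ => 1) ∈ LinearMap.range Q.mulVecLin) : (augmentOnes Q).rank = Q.rank := by
  rw [range_mulVecLin] at h
  rw [rank_eq_finrank_span_cols, rank_eq_finrank_span_cols, col_augmentOnes, Fin.range_snoc,
    Submodule.span_insert_eq_span h]

lemma rank_augmentOnes_map_natCast (A : Matrix (Fin n) (Fin m) ℕ) {s : Fin m → ℝ}
    (hs : ∀ i, ∑ t, (A i t : ℝ) * s t = 1) :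
    (A.map (fun x : ℕ => (x : ℚ))).rank
      = (augmentOnes (A.map (fun x : ℕ => (x : ℚ)))).rank := by
  refine (rank_augmentOnes_of_mem_range _ (mem_range_mulVecLin_of_map_mulVec_eq _ _ s ?_)).symm
  ext i
  simpa [mulVec, dotProduct] using hs i

end Rank

namespace EffectAlgebra

variable {E : Type*} (W : EffectAlgebra E)

lemma one_oplus_zero : W.oplus W.one W.zero = some W.one := by
  obtain ⟨q, hq, -⟩ := W.orthosupp W.one
  rwa [W.zero_unit q W.one hq] at hq

lemma assoc' {p q r s pq : E} (hpq : W.oplus p q = some pq) (hs : W.oplus pq r = some s) :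
    ∃ qr, W.oplus q r = some qr ∧ W.oplus p qr = some s := by
  rw [W.comm] at hs
  obtain ⟨rp, hrp, hrpq⟩ := W.assoc r p q s pq hpq hs
  rw [W.comm] at hrpq
  obtain ⟨qr, hqr, h⟩ := W.assoc q r p s rp hrp hrpq
  exact ⟨qr, hqr, W.comm p qr ▸ h⟩

lemma zero_oplus (p : E) : W.oplus W.zero p = some p := by
  obtain ⟨p', hp', -⟩ := W.orthosupp p
  obtain ⟨q, hq, hq'⟩ := W.assoc W.zero p p' W.one W.one hp' (W.comm _ _ ▸ W.one_oplus_zero)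
  obtain ⟨r, -, hr⟩ := W.orthosupp p'
  rw [hq, hr q (by dsimp only; rwa [W.comm]), hr p (by dsimp only; rwa [W.comm])]

lemma oplus_zero (p : E) : W.oplus p W.zero = some p :=
  W.comm _ _ ▸ W.zero_oplus p

lemma oplus_left_cancel {x b c d : E} (hb : W.oplus x b = some d) (hc : W.oplus x c = some d) :
    b = c := by
  obtain ⟨d', hd', -⟩ := W.orthosupp d
  rw [W.comm] at hd'
  obtain ⟨u, hu, hub⟩ := W.assoc d' x b W.one d hb hd'
  obtain ⟨u', hu', huc⟩ := W.assoc d' x c W.one d hc hd'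
  obtain rfl : u = u' := Option.some.inj (hu.symm.trans hu')
  obtain ⟨r, -, hr⟩ := W.orthosupp u
  exact (hr b hub).trans (hr c huc).symm

lemma eq_zero_of_oplus_eq_zero {p r : E} (h : W.oplus p r = some W.zero) : p = W.zero := by
  obtain ⟨r1, hr1, hpr1⟩ := W.assoc' h (W.zero_oplus W.one)
  obtain rfl : r = W.zero := W.zero_unit r r1 (W.comm _ _ ▸ hr1)
  obtain rfl : W.one = r1 := Option.some.inj ((W.zero_oplus W.one).symm.trans hr1)
  exact W.zero_unit p W.one (W.comm _ _ ▸ hpr1)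

abbrev toPartialOrder : PartialOrder E where
  le := W.le
  le_refl x := ⟨W.zero, W.oplus_zero x⟩
  le_trans _ _ _ := fun ⟨_, hu⟩ ⟨_, hv⟩ =>
    let ⟨uv, _, h⟩ := W.assoc' hu hv
    ⟨uv, h⟩
  le_antisymm p _ := fun ⟨u, hu⟩ ⟨_, hv⟩ => by
    obtain ⟨uv, huv, h⟩ := W.assoc' hu hv
    obtain rfl : uv = W.zero := W.oplus_left_cancel h (W.oplus_zero p)
    obtain rfl : u = W.zero := W.eq_zero_of_oplus_eq_zero huv
    exact Option.some.inj ((W.oplus_zero p).symm.trans hu)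

lemma listSum_cons (x : E) (l : List E) :
    W.listSum (x :: l) = (W.listSum l).bind (W.oplus x) := rfl

lemma listSum_append {l₁ l₂ : List E} {y z s : E} (h₁ : W.listSum l₁ = some y)
    (h₂ : W.listSum l₂ = some z) (h : W.oplus y z = some s) :
    W.listSum (l₁ ++ l₂) = some s := by
  induction l₁ generalizing y s with
  | nil =>
    obtain rfl := Option.some.inj h₁
    rwa [← Option.some.inj ((W.zero_oplus z).symm.trans h)]
  | cons x l₁ ih =>
    obtain ⟨u, hu, hxu⟩ := Option.bind_eq_some_iff.1 h₁
    obtain ⟨uz, huz, hxuz⟩ := W.assoc' hxu h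
    rw [List.cons_append, listSum_cons, ih hu huz, Option.bind_some, hxuz]

lemma listSum_singleton (x : E) : W.listSum [x] = some x :=
  W.oplus_zero x

lemma bind_oplus_comm (x y u : E) :
    (W.oplus x u).bind (W.oplus y) = (W.oplus y u).bind (W.oplus x) := by
  suffices ∀ {x y s : E}, (W.oplus x u).bind (W.oplus y) = some s →
      (W.oplus y u).bind (W.oplus x) = some s from
    Option.ext fun s => ⟨this, this⟩
  intro x y s h
  obtain ⟨xu, hxu, hyxu⟩ := Option.bind_eq_some_iff.1 h
  obtain ⟨yx, hyx, hyxu⟩ := W.assoc y x u s xu hxu hyxu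
  obtain ⟨yu, hyu, hxyu⟩ := W.assoc' (W.comm y x ▸ hyx) hyxu
  rw [hyu, Option.bind_some, hxyu]

lemma listSum_perm {l l' : List E} (h : l.Perm l') : W.listSum l = W.listSum l' := by
  induction h with
  | nil => rfl
  | cons x _ ih => rw [listSum_cons, listSum_cons, ih]
  | swap x y l =>
    simp only [listSum_cons]
    cases W.listSum l with
    | none => rfl
    | some u => exact W.bind_oplus_comm x y u
  | trans _ _ ih₁ ih₂ => rw [ih₁, ih₂]

lemma exists_listSum_of_isAtomElem [Finite E] (x : E) :
    ∃ l : List E, (∀ y ∈ l, W.IsAtomElem y) ∧ W.listSum l = some x := by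
  let := W.toPartialOrder
  induction x using WellFoundedLT.induction with
  | _ x ih =>
  by_cases h0 : x = W.zero
  · exact ⟨[], by simp, h0 ▸ rfl⟩
  by_cases hx : W.IsAtomElem x
  · exact ⟨[x], by simpa using hx, W.listSum_singleton x⟩
  obtain ⟨y, ⟨r, hyr⟩, hy0, hyx⟩ : ∃ y, W.le y x ∧ y ≠ W.zero ∧ y ≠ x := by
    simpa [IsAtomElem, h0] using hx
  have hrx : r ≠ x := by
    rintro rfl
    exact hy0 (W.oplus_left_cancel (W.comm _ _ ▸ hyr) (W.oplus_zero r))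
  obtain ⟨ly, hly, hy⟩ := ih y (lt_of_le_of_ne ⟨r, hyr⟩ hyx)
  obtain ⟨lr, hlr, hr⟩ := ih r (lt_of_le_of_ne ⟨y, W.comm _ _ ▸ hyr⟩ hrx)
  refine ⟨ly ++ lr, ?_, W.listSum_append hy hr hyr⟩
  simpa [or_imp, forall_and] using ⟨hly, hlr⟩

def mulList {m : ℕ} (a : Fin m → E) (k : Fin m → ℕ) : List E :=
  (List.ofFn fun t => List.replicate (k t) (a t)).flatten

lemma mulSum_eq_listSum_mulList {m : ℕ} (a : Fin m → E) (k : Fin m → ℕ) :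
    W.mulSum a k = W.listSum (mulList a k) := rfl

lemma count_mulList [DecidableEq E] {m : ℕ} (a : Fin m → E) (k : Fin m → ℕ) (x : E) :
    (mulList a k).count x = ∑ t, if a t = x then k t else 0 := by
  simp [mulList, List.count_flatten, List.sum_ofFn, Function.comp_def, List.count_replicate]

lemma mulList_add_perm {m : ℕ} (a : Fin m → E) (k l : Fin m → ℕ) :
    (mulList a (k + l)).Perm (mulList a k ++ mulList a l) := by
  classical
  rw [List.perm_iff_count]
  intro x
  rw [List.count_append, count_mulList, count_mulList, count_mulList, ← Finset.sum_add_distrib]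
  exact Finset.sum_congr rfl fun t _ => by split_ifs <;> simp

lemma mulList_count_perm [DecidableEq E] {m : ℕ} {a : Fin m → E} (ha : Function.Injective a)
    {l : List E} (hl : ∀ x ∈ l, ∃ t, x = a t) :
    (mulList a fun t => l.count (a t)).Perm l := by
  rw [List.perm_iff_count]
  intro x
  rw [count_mulList]
  by_cases hx : ∃ t, a t = x
  · obtain ⟨t, rfl⟩ := hx
    rw [Finset.sum_eq_single t (fun t' _ ht' => if_neg fun h => ht' (ha h)) (by simp), if_pos rfl]
  · simp only [not_exists] at hx
    rw [Finset.sum_eq_zero fun t _ => if_neg (hx t), eq_comm, List.count_eq_zero]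
    intro hmem
    obtain ⟨t, rfl⟩ := hl x hmem
    exact hx t rfl

lemma mulSum_add {m : ℕ} {a : Fin m → E} {k l : Fin m → ℕ} {p q r : E}
    (hk : W.mulSum a k = some p) (hl : W.mulSum a l = some q) (h : W.oplus p q = some r) :
    W.mulSum a (k + l) = some r := by
  rw [mulSum_eq_listSum_mulList, W.listSum_perm (mulList_add_perm a k l)]
  exact W.listSum_append hk hl h

lemma exists_mulSum_eq [Finite E] {m : ℕ} {a : Fin m → E} (ha : Function.Injective a)
    (hatoms : ∀ x, W.IsAtomElem x → ∃ t, x = a t) (x : E) :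
    ∃ k : Fin m → ℕ, W.mulSum a k = some x := by
  classical
  obtain ⟨l, hl, hlx⟩ := W.exists_listSum_of_isAtomElem x
  refine ⟨fun t => l.count (a t), ?_⟩
  rw [mulSum_eq_listSum_mulList,
    W.listSum_perm (mulList_count_perm ha fun y hy => hatoms y (hl y hy)), hlx]

variable {W}

lemma IsState.map_zero {s : E → ℝ} (hs : W.IsState s) : s W.zero = 0 := by
  have := (hs.2.2 W.zero W.one W.one (W.zero_oplus W.one)).2
  linarith

lemma IsState.map_listSum {s : E → ℝ} (hs : W.IsState s) {l : List E} {x : E}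
    (hx : W.listSum l = some x) : s x = (l.map s).sum := by
  induction l generalizing x with
  | nil =>
    obtain rfl := Option.some.inj hx
    simpa using hs.map_zero
  | cons y l ih =>
    obtain ⟨u, hu, hyu⟩ := Option.bind_eq_some_iff.1 hx
    rw [List.map_cons, List.sum_cons, ← ih hu]
    exact (hs.2.2 y u x hyu).2

lemma IsState.map_mulSum {s : E → ℝ} (hs : W.IsState s) {m : ℕ} {a : Fin m → E}
    {k : Fin m → ℕ} {x : E} (hk : W.mulSum a k = some x) :
    s x = ∑ t, (k t : ℝ) * s (a t) := by
  rw [hs.map_listSum hk]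
  simp [List.map_flatten, List.sum_flatten, List.map_ofFn, List.sum_ofFn,
    Function.comp_def]

variable (W)

lemma sum_mul_eq_of_mulSum_eq [Finite E] {m : ℕ} {a : Fin m → E}
    (ha : Function.Injective a) (hatoms : ∀ x, W.IsAtomElem x → ∃ t, x = a t)
    {w : Fin m → ℝ} (hw : ∀ k ∈ W.SeqSet a, ∑ t, (k t : ℝ) * w t = 1)
    {k k' : Fin m → ℕ} {x : E} (hk : W.mulSum a k = some x) (hk' : W.mulSum a k' = some x) :
    ∑ t, (k t : ℝ) * w t = ∑ t, (k' t : ℝ) * w t := by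
  obtain ⟨x', hx', -⟩ := W.orthosupp x
  obtain ⟨l, hl⟩ := W.exists_mulSum_eq ha hatoms x'
  have e := hw _ (W.mulSum_add hk hl hx')
  have e' := hw _ (W.mulSum_add hk' hl hx')
  simp only [Pi.add_apply, Nat.cast_add, add_mul, Finset.sum_add_distrib] at e e'
  linarith

lemma exists_isState_of_weights [Finite E] {m : ℕ} {a : Fin m → E}
    (ha : Function.Injective a) (hatoms : ∀ x, W.IsAtomElem x → ∃ t, x = a t)
    {w : Fin m → ℝ} (hw0 : ∀ t, 0 ≤ w t)
    (hw : ∀ k ∈ W.SeqSet a, ∑ t, (k t : ℝ) * w t = 1) :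
    ∃ s : E → ℝ, W.IsState s := by
  choose k hk using W.exists_mulSum_eq ha hatoms
  set s : E → ℝ := fun x => ∑ t, (k x t : ℝ) * w t
  have hs0 : ∀ x, 0 ≤ s x := fun x =>
    Finset.sum_nonneg fun t _ => mul_nonneg (Nat.cast_nonneg _) (hw0 t)
  have hs1 : s W.one = 1 := hw _ (hk W.one)
  have hadd : ∀ p q r, W.oplus p q = some r → s r = s p + s q := fun p q r h => by
    simp only [s]
    rw [W.sum_mul_eq_of_mulSum_eq ha hatoms hw (hk r) (W.mulSum_add (hk p) (hk q) h)]
    simp only [Pi.add_apply, Nat.cast_add, add_mul, Finset.sum_add_distrib]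
  have hle1 : ∀ x, s x ≤ 1 := fun x => by
    obtain ⟨x', hx', -⟩ := W.orthosupp x
    linarith [hadd x x' W.one hx', hs0 x']
  refine ⟨s, fun x => ⟨hs0 x, hle1 x⟩, hs1, fun p q r h => ?_⟩
  exact ⟨hadd p q r h ▸ hle1 r, hadd p q r h⟩

end EffectAlgebra

/-- Main theorem: a finite effect algebra `E` has a state iff
`rank A = rank (A|1)` and `A·s = 1` has a nonnegative real solution. -/
theorem has_state_iff {E : Type*} [Fintype E] (W : EffectAlgebra E)
    {m n : ℕ} (a : Fin m → E) (ha : W.AtomFamily a)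
    (A : Matrix (Fin n) (Fin m) ℕ) (hA : W.MemM a A) :
    (∃ h : E → ℝ, W.IsState h) ↔
      ((A.map (fun x : ℕ => (x : ℚ))).rank
          = (augmentOnes (A.map (fun x : ℕ => (x : ℚ)))).rank ∧
        ∃ s : Fin m → ℝ, (∀ t, 0 ≤ s t) ∧
          ∀ i : Fin n, ∑ t : Fin m, (A i t : ℝ) * s t = 1) := by
  have hrows : ∀ k, k ∈ W.SeqSet a ↔ ∃ i, A i = k := fun k => by rw [← hA.2]; rfl
  constructor
  · rintro ⟨h, hh⟩
    have hsol : ∀ i, ∑ t, (A i t : ℝ) * h (a t) = 1 := fun i => by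
      rw [← hh.map_mulSum ((hrows _).2 ⟨i, rfl⟩), hh.2.1]
    exact ⟨rank_augmentOnes_map_natCast A hsol, _, fun t => (hh.1 _).1, hsol⟩
  · rintro ⟨-, s, hs0, hs⟩
    refine W.exists_isState_of_weights ha.1 ha.2.2 hs0 fun k hk => ?_
    obtain ⟨i, rfl⟩ := (hrows k).1 hk
    exact hs i
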